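/- Let $p > q \geq 1$ with $\gcd(p,q) = 1$. Then $\frac{(p+q-2)!}{p!\,q!} + \frac{1}{p+q-1}\left(\sum_{1 < d \mid \gcd(p-1,q)} \varphi(d)\binom{(p+q-1)/d}{q/d} + \sum_{1 < d \mid \gcd(p,q-1)} \varphi(d)\binom{(p+q-1)/d}{p/d}\right)$ is a positive integer. -/

import Mathlib

/-!
Write `p = a + 1`, `q = b + 1` and `N = p + q - 1`. Burnside's lemma for the rotation action of
`ZMod N` on `k`-subsets of `ZMod N` shows that `∑_{d ∣ gcd(N,k)} φ(d) C(N/d, k/d)` is `N` times the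
number of orbits. Since `gcd(N, q) = gcd(p - 1, q)` and `gcd(N, p) = gcd(p, q - 1)`, the two sums
of the statement are `N i - C(N, q)` and `N j - C(N, p)` for integers `i, j`; and `p + q` divides
`C(p + q, q)` as `gcd(p, q) = 1`. The factorial identity `factorial_div_add_eq` then turns the
expression into `i + j - C(p + q, q) / (p + q)`, an integer, which is positive because the
first summand of the expression is.
-/

open Finset Pointwise AddAction
open scoped Nat

section PreimageMk

variable {G : Type*} [AddCommGroup G] [Fintype G] (H : AddSubgroup G) [DecidableEq (G ⧸ H)]

def finsetPreimageMk (t : Finset (G ⧸ H)) : Finset G := {x | (x : G ⧸ H) ∈ t}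

variable {H}

@[simp]
lemma mem_finsetPreimageMk {t : Finset (G ⧸ H)} {x : G} :
    x ∈ finsetPreimageMk H t ↔ (x : G ⧸ H) ∈ t := by
  simp [finsetPreimageMk]

lemma card_finsetPreimageMk (t : Finset (G ⧸ H)) :
    #(finsetPreimageMk H t) = #t * Nat.card H := by
  have hcoe : (finsetPreimageMk H t : Set G) = QuotientAddGroup.mk ⁻¹' (t : Set (G ⧸ H)) := by
    ext; simp
  rw [← Set.ncard_coe_finset, ← Nat.card_coe_set_eq, hcoe,
    Nat.card_congr (QuotientAddGroup.preimageMkEquivAddSubgroupProdSet H _), Nat.card_prod,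
    Nat.card_coe_set_eq, Set.ncard_coe_finset, mul_comm]

lemma image_mk_finsetPreimageMk (t : Finset (G ⧸ H)) :
    (finsetPreimageMk H t).image QuotientAddGroup.mk = t := by
  ext c
  obtain ⟨x, rfl⟩ := QuotientAddGroup.mk_surjective c
  simp only [mem_image, mem_finsetPreimageMk]
  exact ⟨fun ⟨y, hy, hyx⟩ => hyx ▸ hy, fun hx => ⟨x, hx, rfl⟩⟩

variable [DecidableEq G]

lemma le_stabilizer_finsetPreimageMk (t : Finset (G ⧸ H)) :
    H ≤ stabilizer G (finsetPreimageMk H t) := by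
  intro h hh
  rw [mem_stabilizer_iff]
  ext x
  rw [← neg_neg h, Finset.mem_neg_vadd_finset_iff]
  simp [QuotientAddGroup.eq_zero_iff h |>.mpr hh]

lemma finsetPreimageMk_image_mk {s : Finset G} (hs : H ≤ stabilizer G s) :
    finsetPreimageMk H (s.image QuotientAddGroup.mk) = s := by
  ext x
  simp only [mem_finsetPreimageMk, mem_image]
  refine ⟨fun ⟨y, hy, hyx⟩ => ?_, fun hx => ⟨x, hx, rfl⟩⟩
  have hxy : x - y ∈ H := by
    simpa [sub_eq_neg_add] using QuotientAddGroup.eq.mp hyx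
  rw [← mem_stabilizer_iff.mp (hs hxy)]
  simpa using vadd_mem_vadd_finset (a := x - y) hy

end PreimageMk

section FixedBy

variable {G : Type*} [AddCommGroup G] [DecidableEq G]

lemma mem_fixedBy_powersetCard_iff {g : G} {k : ℕ} {s : Set.powersetCard G k} :
    s ∈ fixedBy (Set.powersetCard G k) g ↔
      AddSubgroup.zmultiples g ≤ stabilizer G (s : Finset G) := by
  rw [mem_fixedBy, AddSubgroup.zmultiples_le, mem_stabilizer_iff, ← Subtype.val_inj,
    Set.powersetCard.coe_vadd]

variable [Fintype G]

def fixedByPowersetCardEquiv (g : G) (k : ℕ) [DecidableEq (G ⧸ AddSubgroup.zmultiples g)] :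
    fixedBy (Set.powersetCard G k) g ≃
      {t : Finset (G ⧸ AddSubgroup.zmultiples g) // #t * addOrderOf g = k} where
  toFun s := ⟨(s : Finset G).image QuotientAddGroup.mk, by
    rw [← Nat.card_zmultiples, ← card_finsetPreimageMk,
      finsetPreimageMk_image_mk (mem_fixedBy_powersetCard_iff.mp s.2)]
    exact Set.powersetCard.card_eq _⟩
  invFun t := ⟨⟨finsetPreimageMk _ t.1, by
      rw [Set.powersetCard.mem_iff, card_finsetPreimageMk, Nat.card_zmultiples, t.2]⟩,
    mem_fixedBy_powersetCard_iff.mpr (le_stabilizer_finsetPreimageMk _)⟩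
  left_inv s := Subtype.ext <| Subtype.ext <|
    finsetPreimageMk_image_mk (mem_fixedBy_powersetCard_iff.mp s.2)
  right_inv t := Subtype.ext <| image_mk_finsetPreimageMk t.1

lemma card_fixedBy_powersetCard (g : G) (k : ℕ) :
    Nat.card (fixedBy (Set.powersetCard G k) g) =
      if addOrderOf g ∣ k then (Nat.card G / addOrderOf g).choose (k / addOrderOf g) else 0 := by
  classical
  have hg := addOrderOf_pos g
  rw [Nat.card_congr (fixedByPowersetCardEquiv g k)]
  split_ifs with hk
  · obtain ⟨m, rfl⟩ := hk
    have hQ : Fintype.card (G ⧸ AddSubgroup.zmultiples g) = Nat.card G / addOrderOf g := by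
      rw [AddSubgroup.card_eq_card_quotient_mul_card_addSubgroup (AddSubgroup.zmultiples g),
        Nat.card_zmultiples, Nat.mul_div_cancel _ hg, Nat.card_eq_fintype_card]
    rw [Nat.mul_div_cancel_left _ hg, ← hQ, ← Fintype.card_finset_len, Nat.card_eq_fintype_card]
    refine Fintype.card_congr (Equiv.subtypeEquivRight fun t => ?_)
    rw [mul_comm, Nat.mul_left_cancel_iff hg]
  · have : IsEmpty {t : Finset (G ⧸ AddSubgroup.zmultiples g) // #t * addOrderOf g = k} :=
      ⟨fun t => hk ⟨#t.1, t.2.symm.trans (mul_comm _ _)⟩⟩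
    exact Nat.card_of_isEmpty

end FixedBy

lemma IsAddCyclic.sum_addOrderOf {α M : Type*} [AddGroup α] [IsAddCyclic α] [Fintype α]
    [AddCommMonoid M] (f : ℕ → M) :
    ∑ a : α, f (addOrderOf a) = ∑ d ∈ (Fintype.card α).divisors, φ d • f d := by
  classical
  rw [← sum_fiberwise_of_maps_to (g := addOrderOf) fun a _ =>
    Nat.mem_divisors.mpr ⟨addOrderOf_dvd_card, Fintype.card_ne_zero⟩]
  refine sum_congr rfl fun d hd => ?_
  rw [sum_congr rfl fun a ha => congrArg f (mem_filter.mp ha).2, sum_const,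
    IsAddCyclic.card_addOrderOf_eq_totient (Nat.dvd_of_mem_divisors hd)]

lemma sum_divisors_eq_add_sum_filter_one_lt {M : Type*} [AddCommMonoid M] {n : ℕ} (hn : n ≠ 0)
    (f : ℕ → M) : ∑ d ∈ n.divisors, f d = f 1 + ∑ d ∈ n.divisors with 1 < d, f d := by
  rw [← add_sum_erase _ _ (Nat.one_mem_divisors.mpr hn)]
  congr 2
  ext d
  rw [mem_erase, mem_filter, and_comm, and_congr_right_iff]
  intro hd
  have := Nat.pos_of_mem_divisors hd
  omega

lemma dvd_sum_totient_mul_choose (n k : ℕ) (hn : n ≠ 0) :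
    n ∣ ∑ d ∈ (n.gcd k).divisors, φ d * (n / d).choose (k / d) := by
  classical
  have : NeZero n := ⟨hn⟩
  have burnside := sum_card_fixedBy_eq_card_orbits_mul_card_addGroup (ZMod n)
    (Set.powersetCard (ZMod n) k)
  simp only [← Nat.card_eq_fintype_card, card_fixedBy_powersetCard, Nat.card_zmod] at burnside
  rw [IsAddCyclic.sum_addOrderOf (fun d => if d ∣ k then (n / d).choose (k / d) else 0),
    ZMod.card] at burnside
  have hdivisors : {d ∈ n.divisors | d ∣ k} = (n.gcd k).divisors := by
    rw [← Nat.divisors_filter_dvd_of_dvd hn (Nat.gcd_dvd_left n k)]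
    exact filter_congr fun d hd => by
      rw [Nat.dvd_gcd_iff, and_iff_right (Nat.dvd_of_mem_divisors hd)]
  simp only [smul_eq_mul, mul_ite, mul_zero, ← sum_filter, hdivisors] at burnside
  rw [burnside]
  exact dvd_mul_left n _

lemma dvd_choose_add_sum_filter_one_lt (n k : ℕ) (hn : n ≠ 0) :
    n ∣ n.choose k + ∑ d ∈ (n.gcd k).divisors with 1 < d, φ d * (n / d).choose (k / d) := by
  simpa [sum_divisors_eq_add_sum_filter_one_lt (Nat.gcd_ne_zero_left hn)] using
    dvd_sum_totient_mul_choose n k hn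

lemma add_dvd_choose_of_coprime {p q : ℕ} (hq : 0 < q) (h : p.Coprime q) :
    p + q ∣ (p + q).choose q := by
  obtain ⟨b, rfl⟩ := Nat.exists_eq_add_one_of_ne_zero hq.ne'
  have hcop : (p + (b + 1)).Coprime (b + 1) := by
    rwa [Nat.Coprime, Nat.gcd_add_self_left]
  refine hcop.dvd_of_dvd_mul_right ⟨(p + b).choose b, ?_⟩
  rw [← add_assoc, Nat.add_one_mul_choose_eq, mul_comm]

lemma factorial_div_add_eq (a b : ℕ) (S T : ℚ) :
    ((a + b)! : ℚ) / ((a + 1)! * (b + 1)!) + 1 / (a + b + 1) * (S + T) =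
      (((a + b + 1).choose (b + 1) : ℚ) + S) / (a + b + 1) +
        (((a + b + 1).choose (a + 1) : ℚ) + T) / (a + b + 1) -
        ((a + b + 2).choose (b + 1) : ℚ) / (a + b + 2) := by
  rw [Nat.cast_choose ℚ (by omega : b + 1 ≤ a + b + 1),
    Nat.cast_choose ℚ (by omega : a + 1 ≤ a + b + 1),
    Nat.cast_choose ℚ (by omega : b + 1 ≤ a + b + 2), show a + b + 1 - (b + 1) = a by omega,
    show a + b + 1 - (a + 1) = b by omega, show a + b + 2 - (b + 1) = a + 1 by omega]
  push_cast [Nat.factorial_succ]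
  field_simp
  ring

lemma exists_pos_natCast_eq_of_eq_intCast {R : Type*} [Ring R] [LinearOrder R]
    [IsStrictOrderedRing R] {x : R} {z : ℤ} (hx : 0 < x) (hz : x = z) :
    ∃ n : ℕ, 0 < n ∧ x = n := by
  subst hz
  lift z to ℕ using (Int.cast_pos.mp hx).le
  exact ⟨z, by exact_mod_cast hx, by simp⟩

/-- For `p > q ≥ 1` with `gcd(p,q) = 1`, the counting expression
`(p+q-2)!/(p!q!) + (1/(p+q-1))(∑_{1<d∣gcd(p-1,q)} φ(d) C((p+q-1)/d, q/d)
  + ∑_{1<d∣gcd(p,q-1)} φ(d) C((p+q-1)/d, p/d))` is a positive integer. -/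
theorem stmt7 (p q : ℕ) (hq : 1 ≤ q) (hpq : q < p) (h : Nat.gcd p q = 1) :
    ∃ n : ℕ, 0 < n ∧
      (Nat.factorial (p + q - 2) : ℚ) / ((Nat.factorial p : ℚ) * (Nat.factorial q : ℚ))
        + (1 : ℚ) / ((p : ℚ) + (q : ℚ) - 1) *
          ((∑ d ∈ (Nat.gcd (p - 1) q).divisors.filter (fun d => 1 < d),
              (Nat.totient d : ℚ) * (Nat.choose ((p + q - 1) / d) (q / d) : ℚ))
           + ∑ d ∈ (Nat.gcd p (q - 1)).divisors.filter (fun d => 1 < d),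
              (Nat.totient d : ℚ) * (Nat.choose ((p + q - 1) / d) (p / d) : ℚ)) = (n : ℚ) := by
  obtain ⟨a, rfl⟩ := Nat.exists_eq_add_one_of_ne_zero (by omega : p ≠ 0)
  obtain ⟨b, rfl⟩ := Nat.exists_eq_add_one_of_ne_zero (by omega : q ≠ 0)
  have hgcd₁ : (a + b + 1).gcd (b + 1) = a.gcd (b + 1) := by
    rw [add_assoc, Nat.gcd_add_self_left]
  have hgcd₂ : (a + b + 1).gcd (a + 1) = (a + 1).gcd b := by
    rw [add_right_comm, Nat.gcd_self_add_left, Nat.gcd_comm]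
  obtain ⟨i, hi⟩ := dvd_choose_add_sum_filter_one_lt (a + b + 1) (b + 1) (by omega)
  obtain ⟨j, hj⟩ := dvd_choose_add_sum_filter_one_lt (a + b + 1) (a + 1) (by omega)
  obtain ⟨m, hm⟩ := add_dvd_choose_of_coprime (by omega : 0 < b + 1) h
  rw [hgcd₁] at hi
  rw [hgcd₂] at hj
  rw [show a + 1 + (b + 1) = a + b + 2 by ring] at hm
  apply_fun ((↑) : ℕ → ℚ) at hi hj hm
  push_cast at hi hj hm
  simp only [add_tsub_cancel_right, show a + 1 + (b + 1) - 2 = a + b by omega,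
    show a + 1 + (b + 1) - 1 = a + b + 1 by omega]
  push_cast
  rw [show (a : ℚ) + 1 + (b + 1) - 1 = a + b + 1 by ring]
  refine exists_pos_natCast_eq_of_eq_intCast (z := i + j - m) (by positivity) ?_
  rw [factorial_div_add_eq, hi, hj, hm]
  field_simp
  push_cast
  ring
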